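/- Let K be a field, D = K[x,y], and let f, g ∈ D be coprime polynomials with zero constant term. Then for all sufficiently large N, the fractions x/(fg)^N and y/(fg)^N lie in R(D). -/

import Mathlib

/-!
The numerators `a` with `a / (fg)^N ∈ R(D)` for some `N` form a `K`-subalgebra of `D` that
contains `f` and `g` and contains every factor of its nonzero elements, so it contains `K[f, g]`
and everything dividing a nonzero element of `K[f, g]`.

Coprime `f, g` vanishing at the origin are algebraically independent. Take a prime factor `π`
of `g` vanishing at the origin, so that `π ∤ f`. Stripping the factor `f ^ m` off a nonzero
`h(f)` and evaluating at the origin shows `π ∤ h(f)`; hence `f` is transcendental, and a relation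
for `g` over `K[f]` would make `g`, and so `π`, divide a nonzero element of `K[f]`.

The substitution `x ↦ 0` maps `K[x, y]` into `K[y]`, of transcendence degree `1`, so it is not
injective on `K[f, g]`: some nonzero element of `K[f, g]` is divisible by `x`, and likewise by `y`.
-/

noncomputable def recip (D : Type*) [CommRing D] [IsDomain D] : Subring (FractionRing D) :=
  Subring.closure {x | ∃ d : D, d ≠ 0 ∧ x = (algebraMap D (FractionRing D) d)⁻¹}

open Polynomial in
theorem eq_zero_of_prime_dvd_aeval {R A : Type*} [CommRing R] [CommRing A] [Algebra R A]
    (ε : A →ₐ[R] R) {π t : A} (hπ : Prime π) (hπε : ε π = 0) (htε : ε t = 0) (hπt : ¬π ∣ t)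
    {p : R[X]} (hp : π ∣ aeval t p) : p = 0 := by
  by_contra hp0
  obtain ⟨q, hpq, hq⟩ := exists_eq_pow_rootMultiplicity_mul_and_not_dvd p hp0 0
  simp only [C_0, sub_zero, X_dvd_iff] at hpq hq
  rw [hpq, map_mul, map_pow, aeval_X] at hp
  obtain ⟨c, hc⟩ := (hπ.dvd_or_dvd hp).resolve_left fun h => hπt (hπ.dvd_of_dvd_pow h)
  apply hq
  have := congrArg ε hc
  rwa [map_mul, hπε, zero_mul, ← aeval_algHom_apply, htε, ← coeff_zero_eq_aeval_zero] at this

theorem transcendental_adjoin_of_prime_dvd {R A : Type*} [CommRing R] [CommRing A] [IsDomain A]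
    [Algebra R A] (ε : A →ₐ[R] R) {π f g : A} (hπ : Prime π) (hπε : ε π = 0) (hfε : ε f = 0)
    (hπf : ¬π ∣ f) (hg : g ≠ 0) (hπg : π ∣ g) :
    Transcendental (Algebra.adjoin R {f}) g := by
  intro halg
  obtain ⟨⟨c, hc⟩, hc0, hgc⟩ := halg.exists_nonzero_dvd (mem_nonZeroDivisors_of_ne_zero hg)
  rw [Algebra.adjoin_singleton_eq_range_aeval] at hc
  obtain ⟨p, rfl⟩ := hc
  have hp0 : p = 0 := eq_zero_of_prime_dvd_aeval ε hπ hπε hfε hπf (hπg.trans hgc)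
  exact hc0 (Subtype.ext (by simp [hp0]))

theorem exists_prime_dvd_map_eq_zero {D K : Type*} [CommRing D] [IsDomain D]
    [UniqueFactorizationMonoid D] [CommRing K] [IsDomain K] (ε : D →+* K) {g : D} (hg : g ≠ 0)
    (hεg : ε g = 0) : ∃ π, Prime π ∧ π ∣ g ∧ ε π = 0 := by
  obtain ⟨u, hu⟩ := UniqueFactorizationMonoid.factors_prod hg
  have hprod : ε (UniqueFactorizationMonoid.factors g).prod = 0 := by
    rw [← hu, map_mul] at hεg
    exact (mul_eq_zero.mp hεg).resolve_right (u.isUnit.map ε).ne_zero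
  rw [map_multiset_prod, Multiset.prod_eq_zero_iff, Multiset.mem_map] at hprod
  obtain ⟨π, hπ, hπ0⟩ := hprod
  exact ⟨π, UniqueFactorizationMonoid.prime_of_factor π hπ,
    UniqueFactorizationMonoid.dvd_of_mem_factors hπ, hπ0⟩

theorem algebraicIndependent_of_isRelPrime {K D : Type*} [CommRing K] [IsDomain K] [CommRing D]
    [IsDomain D] [UniqueFactorizationMonoid D] [Algebra K D] (ε : D →ₐ[K] K) {f g : D}
    (hfg : IsRelPrime f g) (hfε : ε f = 0) (hgε : ε g = 0) :
    AlgebraicIndependent K (fun o : Option Unit => o.elim g fun _ => f) := by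
  have hg : g ≠ 0 := by
    rintro rfl
    simpa [hfε] using (hfg dvd_rfl (dvd_zero f)).map ε
  obtain ⟨π, hπ, hπg, hπε⟩ := exists_prime_dvd_map_eq_zero (ε : D →+* K) hg hgε
  have hπf : ¬π ∣ f := fun h => hπ.not_isUnit (hfg h hπg)
  rw [AlgebraicIndependent.option_iff, algebraicIndependent_unique_type_iff, Set.range_const]
  refine ⟨fun ⟨p, hp0, hp⟩ => hp0 ?_, transcendental_adjoin_of_prime_dvd ε hπ hπε hfε hπf hg hπg⟩
  exact eq_zero_of_prime_dvd_aeval ε hπ hπε hfε hπf (hp ▸ dvd_zero π)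

namespace MvPolynomial

variable {R σ : Type*} [CommRing R]

theorem rename_comp_killCompl_subtype_ne [DecidableEq σ] (i : σ) :
    (rename Subtype.val).comp (killCompl (Subtype.val_injective (p := (· ≠ i)))) =
      aeval (Function.update X i (0 : MvPolynomial σ R)) := by
  ext j
  by_cases h : j = i
  · subst h
    simp [killCompl]
  · simp [killCompl, h, Equiv.apply_ofInjective_symm]

theorem X_dvd_sub_aeval_update [DecidableEq σ] (i : σ) (p : MvPolynomial σ R) :
    X i ∣ p - aeval (Function.update X i 0) p := by
  induction p using MvPolynomial.induction_on with
  | C c => simp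
  | add p q hp hq => simpa only [map_add, add_sub_add_comm] using dvd_add hp hq
  | mul_X p j hp =>
    by_cases h : j = i
    · subst h
      simp
    · simpa [h, ← sub_mul] using hp.mul_right (X j)

theorem X_dvd_of_killCompl_eq_zero {i : σ} {p : MvPolynomial σ R}
    (h : killCompl (Subtype.val_injective (p := (· ≠ i))) p = 0) : X i ∣ p := by
  classical
  have := X_dvd_sub_aeval_update i p
  rwa [← rename_comp_killCompl_subtype_ne, AlgHom.comp_apply, h, map_zero, sub_zero] at this

theorem exists_X_dvd_mem_adjoin_of_algebraicIndependent {K ι : Type*} [CommRing K] [IsDomain K]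
    [Fintype σ] [Fintype ι] {x : ι → MvPolynomial σ K} (hx : AlgebraicIndependent K x)
    (hcard : Fintype.card σ ≤ Fintype.card ι) (i : σ) :
    ∃ a ∈ Algebra.adjoin K (Set.range x), a ≠ 0 ∧ X i ∣ a := by
  classical
  by_contra! h
  have hinj : Set.InjOn (killCompl (Subtype.val_injective (p := (· ≠ i))))
      (Algebra.adjoin K (Set.range x) : Set (MvPolynomial σ K)) := by
    intro a ha b hb hab
    by_contra hne
    exact h (a - b) (sub_mem ha hb) (sub_ne_zero.mpr hne)
      (X_dvd_of_killCompl_eq_zero (by rw [map_sub, hab, sub_self]))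
  have := (hx.map hinj).lift_cardinalMk_le_trdeg
  rw [trdeg_of_isDomain] at this
  simp only [Cardinal.mk_fintype, Cardinal.lift_natCast, Nat.cast_le, Fintype.card_subtype_compl,
    Fintype.card_unique] at this
  have := Fintype.card_pos_iff.mpr ⟨i⟩
  omega

end MvPolynomial

section RecipNumerators

variable {D : Type*} [CommRing D] [IsDomain D]

local notation "φ" => algebraMap D (FractionRing D)

theorem inv_mem_recip (d : D) : (φ d)⁻¹ ∈ recip D := by
  rcases eq_or_ne d 0 with rfl | hd
  · rw [map_zero, inv_zero]
    exact zero_mem _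
  · exact Subring.subset_closure ⟨d, hd, rfl⟩

theorem algebraMap_mem_recip_of_isUnit {u : D} (hu : IsUnit u) : φ u ∈ recip D := by
  obtain ⟨u, rfl⟩ := hu
  simpa [← map_units_inv] using inv_mem_recip (↑u⁻¹ : D)

theorem div_pow_mem_recip_of_le {a s : D} {N M : ℕ} (hNM : N ≤ M)
    (h : φ a / φ (s ^ N) ∈ recip D) : φ a / φ (s ^ M) ∈ recip D := by
  rw [← Nat.add_sub_cancel' hNM, pow_add, map_mul, ← div_div, div_eq_mul_inv _ (φ _)]
  exact mul_mem h (inv_mem_recip _)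

variable (K : Type*) [Field K] [Algebra K D]

/-- By the factroid criterion, this is the union of the factroids `[s ^ N]_D`. -/
def recipNumerators (s : D) : Subalgebra K D where
  carrier := {a | ∃ N : ℕ, φ a / φ (s ^ N) ∈ recip D}
  mul_mem' := by
    rintro a b ⟨N, ha⟩ ⟨M, hb⟩
    refine ⟨N + M, ?_⟩
    rw [map_mul, pow_add, map_mul, ← div_mul_div_comm]
    exact mul_mem ha hb
  add_mem' := by
    rintro a b ⟨N, ha⟩ ⟨M, hb⟩
    refine ⟨max N M, ?_⟩
    rw [map_add, add_div]
    exact add_mem (div_pow_mem_recip_of_le (le_max_left N M) ha)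
      (div_pow_mem_recip_of_le (le_max_right N M) hb)
  algebraMap_mem' c := by
    refine ⟨0, ?_⟩
    rw [pow_zero, map_one, div_one]
    rcases eq_or_ne c 0 with rfl | hc
    · rw [map_zero, map_zero]
      exact zero_mem _
    · exact algebraMap_mem_recip_of_isUnit ((isUnit_iff_ne_zero.mpr hc).map _)

variable {K}

theorem mem_recipNumerators_of_dvd {a s : D} (h : a ∣ s) : a ∈ recipNumerators K s := by
  obtain ⟨c, rfl⟩ := h
  refine ⟨1, ?_⟩
  rcases eq_or_ne a 0 with rfl | ha
  · simp
  · rw [pow_one, map_mul, div_mul_cancel_left₀ (by simpa using ha)]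
    exact inv_mem_recip c

theorem mem_recipNumerators_of_mul_mem {a b s : D} (hb : b ≠ 0)
    (h : a * b ∈ recipNumerators K s) : a ∈ recipNumerators K s := by
  obtain ⟨N, hN⟩ := h
  refine ⟨N, ?_⟩
  rw [map_mul, mul_div_right_comm] at hN
  simpa [hb] using mul_mem hN (inv_mem_recip b)

theorem eventually_div_pow_mem_recip {a s : D} (h : a ∈ recipNumerators K s) :
    ∀ᶠ N in Filter.atTop, φ a / φ (s ^ N) ∈ recip D := by
  obtain ⟨N, hN⟩ := h
  exact Filter.eventually_atTop.mpr ⟨N, fun M hM => div_pow_mem_recip_of_le hM hN⟩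

end RecipNumerators

/-- Let `D = K[x,y]` and let `f, g ∈ D` be coprime polynomials (no
nonunit common factor) with zero constant term.  Then for all sufficiently large `N`,
`x/(fg)^N ∈ R(D)` and `y/(fg)^N ∈ R(D)`. -/
theorem stmt_15 (K : Type*) [Field K] (f g : MvPolynomial (Fin 2) K)
    (hcop : ∀ d : MvPolynomial (Fin 2) K, d ∣ f → d ∣ g → IsUnit d)
    (hf0 : MvPolynomial.constantCoeff f = 0) (hg0 : MvPolynomial.constantCoeff g = 0) :
    ∃ N₀ : ℕ, ∀ N ≥ N₀,
      letI D := MvPolynomial (Fin 2) K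
      letI φ := algebraMap D (FractionRing D)
      φ (MvPolynomial.X 0) / φ ((f * g) ^ N) ∈ recip D ∧
      φ (MvPolynomial.X 1) / φ ((f * g) ^ N) ∈ recip D := by
  -- the pair `(f, g)`, indexed the way `AlgebraicIndependent.option_iff` expects
  let x : Option Unit → MvPolynomial (Fin 2) K := fun o => o.elim g fun _ => f
  have hx : AlgebraicIndependent K x :=
    algebraicIndependent_of_isRelPrime (MvPolynomial.aeval 0) (fun d => hcop d)
      (by simp [MvPolynomial.aeval_zero, hf0]) (by simp [MvPolynomial.aeval_zero, hg0])
  have hle : Algebra.adjoin K (Set.range x) ≤ recipNumerators K (f * g) := by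
    refine Algebra.adjoin_le ?_
    rintro _ ⟨_ | _, rfl⟩
    exacts [mem_recipNumerators_of_dvd (dvd_mul_left g f),
      mem_recipNumerators_of_dvd (dvd_mul_right f g)]
  have hX (i : Fin 2) : MvPolynomial.X i ∈ recipNumerators K (f * g) := by
    obtain ⟨_, ha, ha0, b, rfl⟩ :=
      MvPolynomial.exists_X_dvd_mem_adjoin_of_algebraicIndependent hx (by simp) i
    exact mem_recipNumerators_of_mul_mem (right_ne_zero_of_mul ha0) (hle ha)
  exact Filter.eventually_atTop.mp
    ((eventually_div_pow_mem_recip (hX 0)).and (eventually_div_pow_mem_recip (hX 1)))
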